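/- Let d ≥ 2 and let (x,t),(y,s) be two points of the solid double cone X that both lie in the upper part X₊ or both lie in the lower part X₋. Then |t − s| ≤ d_X((x,t),(y,s)), |√(1−t²) − √(1−s²)| ≤ d_X((x,t),(y,s)), and |√(t²−‖x‖²) − √(s²−‖y‖²)| ≤ (√2 + π)·d_X((x,t),(y,s)). -/

import Mathlib

open MeasureTheory Real Set

noncomputable section

/-- The solid double cone `X = {(x,t) ∈ ℝ^d × ℝ : ‖x‖ ≤ |t| ≤ 1}`. -/
def Xc (d : ℕ) : Set (EuclideanSpace ℝ (Fin d) × ℝ) :=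
  {p | ‖p.1‖ ≤ |p.2| ∧ |p.2| ≤ 1}

/-- The distance
`d_X((x,t),(y,s)) = arccos(⟨x,y⟩ + √(t²−‖x‖²)√(s²−‖y‖²) + √(1−t²)√(1−s²))`. -/
def dXc {d : ℕ} (p q : EuclideanSpace ℝ (Fin d) × ℝ) : ℝ :=
  Real.arccos ((inner ℝ p.1 q.1 : ℝ) +
    Real.sqrt (p.2 ^ 2 - ‖p.1‖ ^ 2) * Real.sqrt (q.2 ^ 2 - ‖q.1‖ ^ 2) +
    Real.sqrt (1 - p.2 ^ 2) * Real.sqrt (1 - q.2 ^ 2))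

/-- The ball `c((x,t),r) = {(y,s) ∈ X : d_X((x,t),(y,s)) ≤ r}`. -/
def capX {d : ℕ} (p : EuclideanSpace ℝ (Fin d) × ℝ) (r : ℝ) :
    Set (EuclideanSpace ℝ (Fin d) × ℝ) :=
  {q ∈ Xc d | dXc p q ≤ r}

/-!
Lift `(x, t)` to the unit vector `(x, √(t² - ‖x‖²), √(1 - t²))`; then `d_X` is the spherical
distance `θ = arccos A` of the lifts, `A` being their inner product. Writing `t = cos α`, `s = cos β`
with `α, β ∈ [0, π]`, Cauchy–Schwarz gives `A ≤ ‖x‖‖y‖ + √(t² - ‖x‖²)√(s² - ‖y‖²) + sin α sin β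
≤ |t||s| + sin α sin β = cos (α - β)` when `ts ≥ 0`, so `|α - β| ≤ θ`, and the first two bounds
follow because `cos` and `sin` are 1-Lipschitz. The difference of the middle coordinates of the
lifts is at most their chord `√(2 - 2A)`, and `2 - 2A ≤ θ²` since `1 - θ² / 2 ≤ cos θ`.
-/

lemma Real.abs_le_arccos_of_le_cos {φ A : ℝ} (hφ : |φ| ≤ π) (hA : A ≤ cos φ) :
    |φ| ≤ arccos A :=
  calc |φ| = arccos (cos |φ|) := (arccos_cos (abs_nonneg φ) hφ).symm
    _ ≤ arccos A := arccos_le_arccos (by rwa [cos_abs])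

lemma Real.two_sub_two_mul_le_arccos_sq {A : ℝ} (h₁ : -1 ≤ A) (h₂ : A ≤ 1) :
    2 - 2 * A ≤ arccos A ^ 2 := by
  have := one_sub_sq_div_two_le_cos (x := arccos A)
  rw [cos_arccos h₁ h₂] at this
  linarith

/-- Two-dimensional Cauchy–Schwarz for the vectors `(a, √(u² - a²))` and `(b, √(v² - b²))`. -/
lemma mul_add_sqrt_mul_sqrt_le {a b u v : ℝ} (ha : 0 ≤ a) (hb : 0 ≤ b) (hau : a ≤ u)
    (hbv : b ≤ v) : a * b + √(u ^ 2 - a ^ 2) * √(v ^ 2 - b ^ 2) ≤ u * v := by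
  have hP := sq_sqrt (sub_nonneg.2 (pow_le_pow_left₀ ha hau 2))
  have hQ := sq_sqrt (sub_nonneg.2 (pow_le_pow_left₀ hb hbv 2))
  have hPQ := mul_nonneg (sqrt_nonneg (u ^ 2 - a ^ 2)) (sqrt_nonneg (v ^ 2 - b ^ 2))
  nlinarith [sq_nonneg (a * √(v ^ 2 - b ^ 2) - b * √(u ^ 2 - a ^ 2)), mul_nonneg ha hb,
    mul_nonneg (ha.trans hau) (hb.trans hbv)]

section Cone

variable {E : Type*} [NormedAddCommGroup E]

def InCone (p : E × ℝ) : Prop := ‖p.1‖ ≤ |p.2| ∧ |p.2| ≤ 1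

lemma InCone.norm_sq_add_sqrt_sq {p : E × ℝ} (hp : InCone p) :
    ‖p.1‖ ^ 2 + √(p.2 ^ 2 - ‖p.1‖ ^ 2) ^ 2 + √(1 - p.2 ^ 2) ^ 2 = 1 := by
  have h₁ : ‖p.1‖ ^ 2 ≤ p.2 ^ 2 := sq_abs p.2 ▸ pow_le_pow_left₀ (norm_nonneg _) hp.1 2
  have h₂ : p.2 ^ 2 ≤ 1 := sq_abs p.2 ▸ pow_le_one₀ (abs_nonneg _) hp.2
  rw [sq_sqrt (by linarith), sq_sqrt (by linarith)]
  ring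

variable [InnerProductSpace ℝ E]

/-- The inner product of the lifts of `p` and `q` to the unit sphere, so that
`dXc p q = arccos (coneCos p q)`. -/
def coneCos (p q : E × ℝ) : ℝ :=
  inner ℝ p.1 q.1 + √(p.2 ^ 2 - ‖p.1‖ ^ 2) * √(q.2 ^ 2 - ‖q.1‖ ^ 2) +
    √(1 - p.2 ^ 2) * √(1 - q.2 ^ 2)

lemma two_sub_two_mul_coneCos {p q : E × ℝ} (hp : InCone p) (hq : InCone q) :
    2 - 2 * coneCos p q = ‖p.1 - q.1‖ ^ 2 +
      (√(p.2 ^ 2 - ‖p.1‖ ^ 2) - √(q.2 ^ 2 - ‖q.1‖ ^ 2)) ^ 2 +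
      (√(1 - p.2 ^ 2) - √(1 - q.2 ^ 2)) ^ 2 := by
  rw [coneCos, @norm_sub_sq_real]
  linear_combination -hp.norm_sq_add_sqrt_sq - hq.norm_sq_add_sqrt_sq

lemma two_add_two_mul_coneCos {p q : E × ℝ} (hp : InCone p) (hq : InCone q) :
    2 + 2 * coneCos p q = ‖p.1 + q.1‖ ^ 2 +
      (√(p.2 ^ 2 - ‖p.1‖ ^ 2) + √(q.2 ^ 2 - ‖q.1‖ ^ 2)) ^ 2 +
      (√(1 - p.2 ^ 2) + √(1 - q.2 ^ 2)) ^ 2 := by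
  rw [coneCos, @norm_add_sq_real]
  linear_combination -hp.norm_sq_add_sqrt_sq - hq.norm_sq_add_sqrt_sq

lemma coneCos_mem_Icc {p q : E × ℝ} (hp : InCone p) (hq : InCone q) :
    coneCos p q ∈ Icc (-1) 1 := by
  constructor
  · nlinarith [two_add_two_mul_coneCos hp hq]
  · nlinarith [two_sub_two_mul_coneCos hp hq]

lemma abs_sqrt_sub_sqrt_le_arccos_coneCos {p q : E × ℝ} (hp : InCone p) (hq : InCone q) :
    |√(p.2 ^ 2 - ‖p.1‖ ^ 2) - √(q.2 ^ 2 - ‖q.1‖ ^ 2)| ≤ arccos (coneCos p q) := by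
  refine abs_le_of_sq_le_sq ?_ (arccos_nonneg _)
  calc _ ≤ 2 - 2 * coneCos p q := by
        rw [two_sub_two_mul_coneCos hp hq]
        nlinarith [sq_nonneg ‖p.1 - q.1‖, sq_nonneg (√(1 - p.2 ^ 2) - √(1 - q.2 ^ 2))]
    _ ≤ arccos (coneCos p q) ^ 2 := two_sub_two_mul_le_arccos_sq (coneCos_mem_Icc hp hq).1
        (coneCos_mem_Icc hp hq).2

lemma coneCos_le_cos_arccos_sub_arccos {p q : E × ℝ} (hp : InCone p) (hq : InCone q)
    (hpq : 0 ≤ p.2 * q.2) : coneCos p q ≤ cos (arccos p.2 - arccos q.2) := by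
  have hp₂ := abs_le.1 hp.2
  have hq₂ := abs_le.1 hq.2
  rw [cos_sub, cos_arccos hp₂.1 hp₂.2, cos_arccos hq₂.1 hq₂.2, sin_arccos, sin_arccos, coneCos,
    ← abs_of_nonneg hpq, abs_mul]
  -- on one nappe `|t| |s| = t s`, which bounds the first two terms of `coneCos`
  have := mul_add_sqrt_mul_sqrt_le (norm_nonneg p.1) (norm_nonneg q.1) hp.1 hq.1
  rw [sq_abs, sq_abs] at this
  linarith [real_inner_le_norm p.1 q.1]

lemma abs_arccos_sub_arccos_le_arccos_coneCos {p q : E × ℝ} (hp : InCone p) (hq : InCone q)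
    (hpq : 0 ≤ p.2 * q.2) : |arccos p.2 - arccos q.2| ≤ arccos (coneCos p q) :=
  abs_le_arccos_of_le_cos
    (abs_sub_le_of_nonneg_of_le (arccos_nonneg _) (arccos_le_pi _) (arccos_nonneg _)
      (arccos_le_pi _))
    (coneCos_le_cos_arccos_sub_arccos hp hq hpq)

end Cone

theorem stmt11_general (d : ℕ) (p q : EuclideanSpace ℝ (Fin d) × ℝ)
    (hp : p ∈ Xc d) (hq : q ∈ Xc d)
    (hsign : (0 ≤ p.2 ∧ 0 ≤ q.2) ∨ (p.2 ≤ 0 ∧ q.2 ≤ 0)) :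
    |p.2 - q.2| ≤ dXc p q ∧
    |Real.sqrt (1 - p.2 ^ 2) - Real.sqrt (1 - q.2 ^ 2)| ≤ dXc p q ∧
    |Real.sqrt (p.2 ^ 2 - ‖p.1‖ ^ 2) - Real.sqrt (q.2 ^ 2 - ‖q.1‖ ^ 2)| ≤
      (Real.sqrt 2 + π) * dXc p q := by
  have hp₂ := abs_le.1 hp.2
  have hq₂ := abs_le.1 hq.2
  have hangle : |arccos p.2 - arccos q.2| ≤ dXc p q :=
    abs_arccos_sub_arccos_le_arccos_coneCos hp hq (mul_nonneg_iff.2 hsign)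
  refine ⟨?_, ?_, ?_⟩
  · calc |p.2 - q.2| = |cos (arccos p.2) - cos (arccos q.2)| := by
          rw [cos_arccos hp₂.1 hp₂.2, cos_arccos hq₂.1 hq₂.2]
      _ ≤ dXc p q := (abs_cos_sub_cos_le _ _).trans hangle
  · calc |√(1 - p.2 ^ 2) - √(1 - q.2 ^ 2)| = |sin (arccos p.2) - sin (arccos q.2)| := by
          rw [sin_arccos, sin_arccos]
      _ ≤ dXc p q := (abs_sin_sub_sin_le _ _).trans hangle
  · calc _ ≤ dXc p q := abs_sqrt_sub_sqrt_le_arccos_coneCos hp hq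
      _ ≤ (√2 + π) * dXc p q :=
          le_mul_of_one_le_left (arccos_nonneg _) (by linarith [pi_gt_three, sqrt_nonneg 2])

/-- if `(x,t),(y,s) ∈ X` both lie in the upper part `X₊` or both in
the lower part `X₋`, then `|t − s| ≤ d_X`, `|√(1−t²) − √(1−s²)| ≤ d_X`, and
`|√(t²−‖x‖²) − √(s²−‖y‖²)| ≤ (√2 + π) d_X`. -/
theorem stmt11 (d : ℕ) (hd : 2 ≤ d) (p q : EuclideanSpace ℝ (Fin d) × ℝ)
    (hp : p ∈ Xc d) (hq : q ∈ Xc d)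
    (hsign : (0 ≤ p.2 ∧ 0 ≤ q.2) ∨ (p.2 ≤ 0 ∧ q.2 ≤ 0)) :
    |p.2 - q.2| ≤ dXc p q ∧
    |Real.sqrt (1 - p.2 ^ 2) - Real.sqrt (1 - q.2 ^ 2)| ≤ dXc p q ∧
    |Real.sqrt (p.2 ^ 2 - ‖p.1‖ ^ 2) - Real.sqrt (q.2 ^ 2 - ‖q.1‖ ^ 2)| ≤
      (Real.sqrt 2 + π) * dXc p q :=
  stmt11_general d p q hp hq hsign
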